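/- arXiv:2305.02376 — 3 statements merged into one kernel-verified Lean document; each statement's English description precedes it below -/
import Mathlib

section
/- There exists a constant δ_0 > 0 such that for every δ > δ_0/√T and every t ∈ [0,T]: lim_{m→∞} P( max_{1≤i≤m} sup_{s∈[0,t]} |β̇_i^m(s)| > δ m^{1/2} 2^{m/2} ) = 0. -/
open MeasureTheory ProbabilityTheory Filter

noncomputable section

variable {Ω : Type*} {mΩ : MeasurableSpace Ω}

/-- A standard real-valued Brownian motion (extended by `0` on `(-∞,0]`),
adapted to the filtration `F`, with increments after time `s` independent of `F s`. -/
structure IsBM (P : Measure Ω) (F : Filtration ℝ mΩ) (B : ℝ → Ω → ℝ) : Prop where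
  zero_of_nonpos : ∀ t ≤ (0 : ℝ), ∀ ω, B t ω = 0
  cont : ∀ ω, Continuous fun t => B t ω
  adapted : Adapted F fun t => B t
  gauss_incr : ∀ s t : ℝ, 0 ≤ s → s ≤ t →
    P.map (fun ω => B t ω - B s ω) = gaussianReal 0 (Real.toNNReal (t - s))
  indep_incr : ∀ s t : ℝ, 0 ≤ s → s ≤ t →
    Indep (MeasurableSpace.comap (fun ω => B t ω - B s ω) (borel ℝ)) (F s) P

/-- Mutual independence of a family of real-valued processes. -/
def IndepFamily (P : Measure Ω) (B : ℕ → ℝ → Ω → ℝ) : Prop :=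
  iIndepFun (m := fun _ : ℕ => (inferInstance : MeasurableSpace (ℝ → ℝ)))
    (fun i ω t => B i t ω) P

/-- `β̇ᵢᵐ(t) = ϖ⁻¹ (βᵢ(⌊t/ϖ⌋ϖ) − βᵢ((⌊t/ϖ⌋−1)ϖ))` with `ϖ = T/2^m`. -/
def bdot (T : ℝ) (m : ℕ) (B : ℝ → Ω → ℝ) (t : ℝ) (ω : Ω) : ℝ :=
  (B ((⌊t / (T / 2 ^ m)⌋ : ℝ) * (T / 2 ^ m)) ω -
      B (((⌊t / (T / 2 ^ m)⌋ : ℝ) - 1) * (T / 2 ^ m)) ω) / (T / 2 ^ m)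

/-!
On `[0, t]` the process `β̇ᵢᵐ` only takes the values `ϖ⁻¹ (βᵢ(kϖ) − βᵢ((k−1)ϖ))`, `k ≤ 2^m`,
and each such increment is `N(0, ϖ)` (or `0` for `k = 0`). Gaussian variables are
sub-Gaussian, so `P(|N(0, ϖ)| > x) ≤ 2 exp(−x²/(2ϖ))`, and a union bound over the
`m (2^m + 1)` increments bounds the probability in question by
`2 m (2^m + 1) exp(−δ² T m / 2)`. This tends to `0` once `δ² T / 2 > log 2`,
which `δ₀ = 2` guarantees.
-/

open Real
open scoped NNReal ENNReal

lemma hasSubgaussianMGF_id_gaussianReal (v : ℝ≥0) :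
    HasSubgaussianMGF id v (gaussianReal 0 v) where
  integrable_exp_mul := integrable_exp_mul_gaussianReal
  mgf_le t := by simp [mgf_id_gaussianReal]

lemma gaussianReal_setOf_lt_abs_le (v : ℝ≥0) {ε : ℝ} (hε : 0 ≤ ε) :
    gaussianReal 0 v {x | ε < |x|} ≤ ENNReal.ofReal (2 * exp (-ε ^ 2 / (2 * v))) := by
  have hX := hasSubgaussianMGF_id_gaussianReal v
  have hsub : {x : ℝ | ε < |x|} ⊆ {x | ε ≤ id x} ∪ {x | ε ≤ (-id) x} := by
    intro x hx
    rcases le_abs'.mp (show ε ≤ |x| from hx.le) with h | h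
    · exact Or.inr (by simp only [Set.mem_ofPred_eq, Pi.neg_apply, id]; linarith)
    · exact Or.inl h
  rw [← ofReal_measureReal]
  gcongr
  calc (gaussianReal 0 v).real {x | ε < |x|}
      ≤ (gaussianReal 0 v).real {x | ε ≤ id x} + (gaussianReal 0 v).real {x | ε ≤ (-id) x} :=
        (measureReal_mono hsub).trans (measureReal_union_le _ _)
    _ ≤ exp (-ε ^ 2 / (2 * v)) + exp (-ε ^ 2 / (2 * v)) :=
        add_le_add (hX.measure_ge_le hε) (hX.neg.measure_ge_le hε)
    _ = 2 * exp (-ε ^ 2 / (2 * v)) := by ring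

section BrownianMotion

variable {P : Measure Ω} {F : Filtration ℝ mΩ} {B : ℝ → Ω → ℝ}

lemma IsBM.measurable (hB : IsBM P F B) (t : ℝ) : Measurable (B t) :=
  (hB.adapted t).mono (F.le t) le_rfl

lemma IsBM.measure_lt_abs_sub_le (hB : IsBM P F B) {s t ε : ℝ} (hs : 0 ≤ s) (hst : s ≤ t)
    (hε : 0 ≤ ε) :
    P {ω | ε < |B t ω - B s ω|} ≤ ENNReal.ofReal (2 * exp (-ε ^ 2 / (2 * (t - s)))) := by
  have hX : Measurable fun ω => B t ω - B s ω := (hB.measurable t).sub (hB.measurable s)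
  have hS : MeasurableSet {x : ℝ | ε < |x|} := measurableSet_lt measurable_const measurable_abs
  calc P {ω | ε < |B t ω - B s ω|}
      = P.map (fun ω => B t ω - B s ω) {x | ε < |x|} := (Measure.map_apply hX hS).symm
    _ ≤ _ := by
      rw [hB.gauss_incr s t hs hst]
      simpa [Real.coe_toNNReal _ (sub_nonneg.mpr hst)] using
        gaussianReal_setOf_lt_abs_le (t - s).toNNReal hε

lemma IsBM.measure_lt_abs_grid_increment_le (hB : IsBM P F B) {h ε : ℝ} (hh : 0 < h)
    (hε : 0 ≤ ε) (k : ℕ) :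
    P {ω | ε < |B (k * h) ω - B ((k - 1) * h) ω|}
      ≤ ENNReal.ofReal (2 * exp (-ε ^ 2 / (2 * h))) := by
  rcases Nat.eq_zero_or_pos k with rfl | hk
  · have hzero : ∀ ω, B (((0 : ℕ) : ℝ) * h) ω - B ((((0 : ℕ) : ℝ) - 1) * h) ω = 0 := fun ω => by
      rw [hB.zero_of_nonpos _ (by simp) ω, hB.zero_of_nonpos _ (by simp; linarith) ω, sub_self]
    simp only [hzero, abs_zero, not_lt.mpr hε, Set.ofPred_false, measure_empty]
    exact zero_le
  · have hk1 : (1 : ℝ) ≤ k := by exact_mod_cast hk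
    have hbound := hB.measure_lt_abs_sub_le (s := (k - 1) * h) (t := k * h)
      (mul_nonneg (by linarith) hh.le) (mul_le_mul_of_nonneg_right (by linarith) hh.le) hε
    rwa [show (k : ℝ) * h - (k - 1) * h = h by ring] at hbound

end BrownianMotion

lemma bdot_eq_of_nonneg {T : ℝ} (hT : 0 ≤ T) (m : ℕ) (B : ℝ → Ω → ℝ) {s : ℝ} (hs : 0 ≤ s)
    (ω : Ω) :
    bdot T m B s ω = (B (⌊s / (T / 2 ^ m)⌋₊ * (T / 2 ^ m)) ω
      - B ((⌊s / (T / 2 ^ m)⌋₊ - 1) * (T / 2 ^ m)) ω) / (T / 2 ^ m) := by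
  rw [bdot, natCast_floor_eq_intCast_floor (by positivity)]

lemma setOf_lt_iSup_abs_bdot_subset {T : ℝ} (hT : 0 < T) (m : ℕ) (B : ℕ → ℝ → Ω → ℝ) {c t : ℝ}
    (hc : 0 ≤ c) (htT : t ≤ T) :
    {ω | c < ⨆ i ∈ Finset.range m, ⨆ s ∈ Set.Icc (0 : ℝ) t, |bdot T m (B i) s ω|}
      ⊆ ⋃ i ∈ Finset.range m, ⋃ k ∈ Finset.range (2 ^ m + 1),
          {ω | c * (T / 2 ^ m) < |B i (k * (T / 2 ^ m)) ω - B i ((k - 1) * (T / 2 ^ m)) ω|} := by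
  have hh : 0 < T / 2 ^ m := by positivity
  intro ω hω
  by_contra hω'
  simp only [Set.mem_iUnion, Finset.mem_range, not_exists] at hω'
  refine (not_lt.mpr ?_) (show c < _ from hω)
  refine Real.iSup_le (fun i => Real.iSup_le (fun hi => Real.iSup_le (fun s =>
    Real.iSup_le (fun hs => ?_) hc) hc) hc) hc
  have hk : ⌊s / (T / 2 ^ m)⌋₊ < 2 ^ m + 1 := by
    refine Nat.lt_succ_of_le (Nat.floor_le_of_le ?_)
    push_cast
    rw [div_le_iff₀ hh, show (2 : ℝ) ^ m * (T / 2 ^ m) = T by field_simp]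
    exact hs.2.trans htT
  rw [bdot_eq_of_nonneg hT.le m (B i) hs.1, abs_div, abs_of_pos hh, div_le_iff₀ hh]
  exact not_lt.mp (hω' i (Finset.mem_range.mp hi) _ hk)

lemma tendsto_mul_two_pow_mul_exp_neg {a : ℝ} (ha : log 2 < a) :
    Tendsto (fun m : ℕ => m * (2 ^ m + 1) * (2 * exp (-(a * m)))) atTop (nhds 0) := by
  set r := 2 * exp (-a)
  have hr : r < 1 := by
    have : exp (-a) < exp (-log 2) := exp_lt_exp.mpr (by linarith)
    rw [exp_neg (log 2), exp_log two_pos] at this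
    show 2 * exp (-a) < 1
    linarith
  have hlim := (tendsto_self_mul_const_pow_of_lt_one (by positivity) hr).const_mul 4
  rw [mul_zero] at hlim
  refine squeeze_zero (fun m => by positivity) (fun m => ?_) hlim
  have hexp : exp (-(a * m)) = exp (-a) ^ m := by rw [← exp_nat_mul]; ring_nf
  have h2m : (2 : ℝ) ^ m + 1 ≤ 2 * 2 ^ m := by linarith [one_le_pow₀ (M₀ := ℝ) one_le_two (n := m)]
  calc (m : ℝ) * (2 ^ m + 1) * (2 * exp (-(a * m)))
      ≤ m * (2 * 2 ^ m) * (2 * exp (-a) ^ m) := by rw [hexp]; gcongr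
    _ = 4 * (m * r ^ m) := by simp only [r, mul_pow]; ring

lemma measure_lt_iSup_abs_bdot_le {P : Measure Ω} {F : Filtration ℝ mΩ} {B : ℕ → ℝ → Ω → ℝ}
    (hB : ∀ i, IsBM P F (B i)) {T : ℝ} (hT : 0 < T) (m : ℕ) {c t : ℝ} (hc : 0 ≤ c)
    (htT : t ≤ T) :
    P {ω | c < ⨆ i ∈ Finset.range m, ⨆ s ∈ Set.Icc (0 : ℝ) t, |bdot T m (B i) s ω|}
      ≤ ENNReal.ofReal (m * (2 ^ m + 1)
          * (2 * exp (-(c * (T / 2 ^ m)) ^ 2 / (2 * (T / 2 ^ m))))) := by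
  have hh : 0 < T / 2 ^ m := by positivity
  calc _ ≤ ∑ i ∈ Finset.range m, ∑ k ∈ Finset.range (2 ^ m + 1),
          P {ω | c * (T / 2 ^ m) < |B i (k * (T / 2 ^ m)) ω - B i ((k - 1) * (T / 2 ^ m)) ω|} :=
        (measure_mono (setOf_lt_iSup_abs_bdot_subset hT m B hc htT)).trans
          ((measure_biUnion_finset_le _ _).trans
            (Finset.sum_le_sum fun i _ => measure_biUnion_finset_le _ _))
    _ ≤ ∑ _i ∈ Finset.range m, ∑ _k ∈ Finset.range (2 ^ m + 1),
          ENNReal.ofReal (2 * exp (-(c * (T / 2 ^ m)) ^ 2 / (2 * (T / 2 ^ m)))) :=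
        Finset.sum_le_sum fun i _ => Finset.sum_le_sum fun k _ =>
          (hB i).measure_lt_abs_grid_increment_le hh (by positivity) k
    _ = _ := by
        simp only [Finset.sum_const, Finset.card_range, nsmul_eq_mul]
        rw [ENNReal.ofReal_mul (p := m * (2 ^ m + 1)) (by positivity), ← mul_assoc]
        congr 1
        exact_mod_cast (ENNReal.ofReal_natCast (m * (2 ^ m + 1))).symm

theorem statement5_general (T : ℝ) (hT : 0 < T) (P : Measure Ω)
    (F : Filtration ℝ mΩ) (B : ℕ → ℝ → Ω → ℝ)
    (hBM : ∀ i, IsBM P F (B i)) :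
    ∃ δ₀ : ℝ, 0 < δ₀ ∧ ∀ δ : ℝ, δ₀ / Real.sqrt T < δ → ∀ t ∈ Set.Icc (0 : ℝ) T,
      Tendsto
        (fun m : ℕ =>
          P {ω | δ * Real.sqrt m * Real.sqrt (2 ^ m) <
              ⨆ i ∈ Finset.range m, ⨆ s ∈ Set.Icc (0 : ℝ) t, |bdot T m (B i) s ω|})
        atTop (nhds 0) := by
  refine ⟨2, two_pos, fun δ hδ t ht => ?_⟩
  have hsT : 0 < √T := sqrt_pos.mpr hT
  have hδ₀ : 2 < δ * √T := by rwa [div_lt_iff₀ hsT] at hδ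
  have hδ : 0 < δ := pos_of_mul_pos_left (two_pos.trans hδ₀) hsT.le
  have ha : log 2 < δ ^ 2 * T / 2 := by
    have : δ ^ 2 * T = (δ * √T) ^ 2 := by rw [mul_pow, sq_sqrt hT.le]
    nlinarith [log_two_lt_d9]
  have hexponent : ∀ m : ℕ, -(δ * √m * √(2 ^ m) * (T / 2 ^ m)) ^ 2 / (2 * (T / 2 ^ m))
      = -(δ ^ 2 * T / 2 * m) := fun m => by
    rw [mul_pow, mul_pow, mul_pow, sq_sqrt (Nat.cast_nonneg m), sq_sqrt (by positivity)]
    field_simp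
  have hlim := ENNReal.tendsto_ofReal (tendsto_mul_two_pow_mul_exp_neg ha)
  rw [ENNReal.ofReal_zero] at hlim
  refine tendsto_of_tendsto_of_tendsto_of_le_of_le tendsto_const_nhds hlim (fun _ => zero_le)
    fun m => ?_
  simpa only [hexponent] using
    measure_lt_iSup_abs_bdot_le hBM hT m (c := δ * √m * √(2 ^ m)) (by positivity) ht.2

/-- there is `δ₀ > 0` such that for every `δ > δ₀/√T` and every
`t ∈ [0,T]`, `P( max_{1≤i≤m} sup_{s∈[0,t]} |β̇ᵢᵐ(s)| > δ m^{1/2} 2^{m/2} ) → 0`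
as `m → ∞`. -/
theorem statement5 (T : ℝ) (hT : 0 < T) (P : Measure Ω) [IsProbabilityMeasure P]
    (F : Filtration ℝ mΩ) (B : ℕ → ℝ → Ω → ℝ)
    (hBM : ∀ i, IsBM P F (B i)) (hind : IndepFamily P B) :
    ∃ δ₀ : ℝ, 0 < δ₀ ∧ ∀ δ : ℝ, δ₀ / Real.sqrt T < δ → ∀ t ∈ Set.Icc (0 : ℝ) T,
      Tendsto
        (fun m : ℕ =>
          P {ω | δ * Real.sqrt m * Real.sqrt (2 ^ m) <
              ⨆ i ∈ Finset.range m, ⨆ s ∈ Set.Icc (0 : ℝ) t, |bdot T m (B i) s ω|})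
        atTop (nhds 0) :=
  statement5_general T hT P F B hBM

end
end

section
/- Let T > 0, m ∈ ℕ, ϖ := T/2^m and τ ∈ [0,T]. Then for every measurable function h: [0,T] → [0,∞]: ∫_0^τ ( ∫_{⌊s/ϖ⌋ϖ}^{s} h(l) dl ) ds ≤ ϖ ∫_0^τ h(s) ds. -/
open MeasureTheory Set

/-!
For `s ∈ (0, τ]` the inner interval `(⌊s/ϖ⌋ϖ, s]` lies both in `(0, τ]` and in the window
`(s - ϖ, s]`. Integrating windows of length `c` over all `s` counts each point `l` once for every
`s ∈ [l, l + c)`, so by Tonelli `∫ (∫_{s-c}^s f) ds = c ∫ f`; apply this to `f = 1_{(0,τ]} h`.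
-/

theorem lintegral_lintegral_Ioc_sub_self {f : ℝ → ENNReal} (hf : Measurable f) (c : ℝ) :
    ∫⁻ s, ∫⁻ l in Ioc (s - c) s, f l = ENNReal.ofReal c * ∫⁻ l, f l := by
  let window : Set (ℝ × ℝ) := {p | p.2 ∈ Ioc (p.1 - c) p.1}
  have hwindow : MeasurableSet window :=
    (measurableSet_lt (measurable_fst.sub_const c) measurable_snd).inter
      (measurableSet_le measurable_snd measurable_fst)
  calc ∫⁻ s, ∫⁻ l in Ioc (s - c) s, f l
      = ∫⁻ s, ∫⁻ l, window.indicator (fun p => f p.2) (s, l) := by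
        refine lintegral_congr fun s => ?_
        rw [← lintegral_indicator measurableSet_Ioc]
        rfl
    _ = ∫⁻ l, ∫⁻ s, window.indicator (fun p => f p.2) (s, l) :=
        lintegral_lintegral_swap ((hf.comp measurable_snd).indicator hwindow).aemeasurable
    _ = ∫⁻ l, ENNReal.ofReal c * f l := by
        refine lintegral_congr fun l => ?_
        have hmem : ∀ s, (s, l) ∈ window ↔ s ∈ Ico l (l + c) := fun s => by
          simp only [window, mem_ofPred_eq, mem_Ioc, mem_Ico]
          constructor <;> rintro ⟨h₁, h₂⟩ <;> constructor <;> linarith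
        calc ∫⁻ s, window.indicator (fun p => f p.2) (s, l)
            = ∫⁻ s, (Ico l (l + c)).indicator (fun _ => f l) s := by
              refine lintegral_congr fun s => ?_
              simp only [indicator, hmem]
          _ = ENNReal.ofReal c * f l := by
              rw [lintegral_indicator_const measurableSet_Ico, Real.volume_Ico,
                add_sub_cancel_left, mul_comm]
    _ = ENNReal.ofReal c * ∫⁻ l, f l := lintegral_const_mul _ hf

theorem Ioc_floor_div_mul_subset_Ioc_sub {c : ℝ} (hc : 0 < c) (s : ℝ) :
    Ioc (⌊s / c⌋ * c) s ⊆ Ioc (s - c) s := fun _ hl =>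
  ⟨by linarith [Int.sub_floor_div_mul_lt s hc, hl.1], hl.2⟩

theorem Ioc_floor_div_mul_subset_Ioc_zero {c τ s : ℝ} (hc : 0 < c) (hs : s ∈ Ioc 0 τ) :
    Ioc (⌊s / c⌋ * c) s ⊆ Ioc 0 τ := by
  have hfloor : (0 : ℝ) ≤ ⌊s / c⌋ * c :=
    mul_nonneg (Int.cast_nonneg (Int.floor_nonneg.2 (div_nonneg hs.1.le hc.le))) hc.le
  exact fun _ hl => ⟨hfloor.trans_lt hl.1, hl.2.trans hs.2⟩

theorem statement11_general (T : ℝ) (hT : 0 < T) (m : ℕ) (τ : ℝ)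
    (h : ℝ → ENNReal) (hmeas : Measurable h) :
    (∫⁻ s in Set.Ioc (0 : ℝ) τ,
        ∫⁻ l in Set.Ioc ((⌊s / (T / 2 ^ m)⌋ : ℝ) * (T / 2 ^ m)) s, h l) ≤
      ENNReal.ofReal (T / 2 ^ m) * ∫⁻ s in Set.Ioc (0 : ℝ) τ, h s := by
  set ϖ : ℝ := T / 2 ^ m
  have hϖ : 0 < ϖ := by positivity
  set f := (Ioc 0 τ).indicator h
  have inner_le : ∀ s ∈ Ioc 0 τ,
      ∫⁻ l in Ioc (⌊s / ϖ⌋ * ϖ) s, h l ≤ ∫⁻ l in Ioc (s - ϖ) s, f l := fun s hs =>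
    calc ∫⁻ l in Ioc (⌊s / ϖ⌋ * ϖ) s, h l = ∫⁻ l in Ioc (⌊s / ϖ⌋ * ϖ) s, f l :=
          setLIntegral_congr_fun measurableSet_Ioc fun l hl =>
            (indicator_of_mem (Ioc_floor_div_mul_subset_Ioc_zero hϖ hs hl) h).symm
      _ ≤ ∫⁻ l in Ioc (s - ϖ) s, f l :=
          lintegral_mono_set (Ioc_floor_div_mul_subset_Ioc_sub hϖ s)
  calc ∫⁻ s in Ioc 0 τ, ∫⁻ l in Ioc (⌊s / ϖ⌋ * ϖ) s, h l
      ≤ ∫⁻ s in Ioc 0 τ, ∫⁻ l in Ioc (s - ϖ) s, f l :=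
        setLIntegral_mono' measurableSet_Ioc inner_le
    _ ≤ ∫⁻ s, ∫⁻ l in Ioc (s - ϖ) s, f l := setLIntegral_le_lintegral _ _
    _ = ENNReal.ofReal ϖ * ∫⁻ s in Ioc 0 τ, h s := by
      rw [lintegral_lintegral_Ioc_sub_self (hmeas.indicator measurableSet_Ioc),
        lintegral_indicator measurableSet_Ioc]

theorem statement11 (T : ℝ) (hT : 0 < T) (m : ℕ) (τ : ℝ)
    (hτ : τ ∈ Set.Icc (0 : ℝ) T) (h : ℝ → ENNReal) (hmeas : Measurable h) :
    (∫⁻ s in Set.Ioc (0 : ℝ) τ,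
        ∫⁻ l in Set.Ioc ((⌊s / (T / 2 ^ m)⌋ : ℝ) * (T / 2 ^ m)) s, h l) ≤
      ENNReal.ofReal (T / 2 ^ m) * ∫⁻ s in Set.Ioc (0 : ℝ) τ, h s :=
  statement11_general T hT m τ h hmeas
end

section
/- Let T > 0, m ∈ ℕ, ϖ := T/2^m and τ ∈ [0,T]. Then for every measurable function h: [0,T] → [0,∞]: ∫_0^τ ( ∫_{max(⌊s/ϖ⌋−1, 0)ϖ}^{s} h(l) dl ) ds ≤ 2ϖ ∫_0^τ h(l) dl. -/
open MeasureTheory Set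
open scoped ENNReal

/-!
Every `l` in the inner interval satisfies `l ≤ s < l + 2ϖ`, because the block preceding the one
containing `s` starts after `s - 2ϖ`. Hence, by Tonelli, each value `h l` is counted for a set of
times `s` of length at most `2ϖ`.
-/

theorem setLIntegral_setLIntegral_Ioc_sub_le {ν : Measure ℝ} [SFinite ν] {S : Set ℝ}
    {h : ℝ → ℝ≥0∞} (hh : Measurable h) (δ : ℝ) :
    ∫⁻ s in S, ∫⁻ l in Ioc (s - δ) s ∩ S, h l ∂ν ≤ ENNReal.ofReal δ * ∫⁻ l in S, h l ∂ν := by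
  have hwindow : MeasurableSet {p : ℝ × ℝ | p.1 - δ < p.2 ∧ p.2 ≤ p.1} :=
    (measurableSet_lt (by fun_prop) measurable_snd).inter
      (measurableSet_le measurable_snd measurable_fst)
  have hmeas : Measurable (Function.uncurry fun s l => (Ioc (s - δ) s).indicator h l) :=
    (hh.comp measurable_snd).indicator hwindow
  have hflip : ∀ s l,
      (Ioc (s - δ) s).indicator h l = (Ico l (l + δ)).indicator (fun _ => h l) s := by
    intro s l
    simp only [indicator_apply, mem_Ioc, mem_Ico, sub_lt_iff_lt_add, and_comm]
  calc ∫⁻ s in S, ∫⁻ l in Ioc (s - δ) s ∩ S, h l ∂ν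
      = ∫⁻ s in S, ∫⁻ l in S, (Ioc (s - δ) s).indicator h l ∂ν := by
        simp_rw [lintegral_indicator measurableSet_Ioc, Measure.restrict_restrict measurableSet_Ioc]
    _ = ∫⁻ l in S, (∫⁻ s in S, (Ico l (l + δ)).indicator (fun _ => h l) s) ∂ν := by
        simp_rw [lintegral_lintegral_swap hmeas.aemeasurable, hflip]
    _ ≤ ∫⁻ l in S, ENNReal.ofReal δ * h l ∂ν := by
        refine lintegral_mono fun l => ?_
        calc ∫⁻ s in S, (Ico l (l + δ)).indicator (fun _ => h l) s
            ≤ ∫⁻ s, (Ico l (l + δ)).indicator (fun _ => h l) s := setLIntegral_le_lintegral _ _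
          _ = ENNReal.ofReal δ * h l := by
            rw [lintegral_indicator_const measurableSet_Ico, Real.volume_Ico, add_sub_cancel_left,
              mul_comm]
    _ = ENNReal.ofReal δ * ∫⁻ l in S, h l ∂ν := lintegral_const_mul _ hh

theorem sub_two_mul_lt_max_floor_sub_one_mul {ϖ : ℝ} (hϖ : 0 < ϖ) (s : ℝ) :
    s - 2 * ϖ < ((max (⌊s / ϖ⌋ - 1) 0 : ℤ) : ℝ) * ϖ := by
  have hfloor : s / ϖ - 1 < ⌊s / ϖ⌋ := Int.sub_one_lt_floor _
  have hmax : ((⌊s / ϖ⌋ - 1 : ℤ) : ℝ) ≤ ((max (⌊s / ϖ⌋ - 1) 0 : ℤ) : ℝ) := by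
    exact_mod_cast le_max_left _ _
  calc s - 2 * ϖ = (s / ϖ - 2) * ϖ := by field_simp
    _ < ((⌊s / ϖ⌋ - 1 : ℤ) : ℝ) * ϖ := by gcongr; push_cast; linarith
    _ ≤ _ := by gcongr

theorem Ioc_max_floor_sub_one_mul_subset {ϖ s τ : ℝ} (hϖ : 0 < ϖ) (hs : s ≤ τ) :
    Ioc (((max (⌊s / ϖ⌋ - 1) 0 : ℤ) : ℝ) * ϖ) s ⊆ Ioc (s - 2 * ϖ) s ∩ Ioc 0 τ := by
  have hstart : (0 : ℝ) ≤ ((max (⌊s / ϖ⌋ - 1) 0 : ℤ) : ℝ) * ϖ :=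
    mul_nonneg (by exact_mod_cast le_max_right _ _) hϖ.le
  have hlt := sub_two_mul_lt_max_floor_sub_one_mul hϖ s
  rintro l ⟨hl₁, hl₂⟩
  exact ⟨⟨by linarith, hl₂⟩, by linarith, by linarith⟩

theorem statement12_general (T : ℝ) (hT : 0 < T) (m : ℕ) (τ : ℝ)
    (h : ℝ → ENNReal) (hmeas : Measurable h) :
    (∫⁻ s in Set.Ioc (0 : ℝ) τ,
        ∫⁻ l in Set.Ioc (((max (⌊s / (T / 2 ^ m)⌋ - 1) 0 : ℤ) : ℝ) * (T / 2 ^ m)) s,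
          h l) ≤
      ENNReal.ofReal (2 * (T / 2 ^ m)) * ∫⁻ l in Set.Ioc (0 : ℝ) τ, h l := by
  have hϖ : 0 < T / 2 ^ m := by positivity
  calc _ ≤ ∫⁻ s in Ioc 0 τ, ∫⁻ l in Ioc (s - 2 * (T / 2 ^ m)) s ∩ Ioc 0 τ, h l :=
        setLIntegral_mono' measurableSet_Ioc fun s hs =>
          lintegral_mono_set (Ioc_max_floor_sub_one_mul_subset hϖ hs.2)
    _ ≤ _ := setLIntegral_setLIntegral_Ioc_sub_le hmeas _

theorem statement12 (T : ℝ) (hT : 0 < T) (m : ℕ) (τ : ℝ)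
    (hτ : τ ∈ Set.Icc (0 : ℝ) T) (h : ℝ → ENNReal) (hmeas : Measurable h) :
    (∫⁻ s in Set.Ioc (0 : ℝ) τ,
        ∫⁻ l in Set.Ioc (((max (⌊s / (T / 2 ^ m)⌋ - 1) 0 : ℤ) : ℝ) * (T / 2 ^ m)) s,
          h l) ≤
      ENNReal.ofReal (2 * (T / 2 ^ m)) * ∫⁻ l in Set.Ioc (0 : ℝ) τ, h l :=
  statement12_general T hT m τ h hmeas
end
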